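/- Let a ≤ b be real numbers and let {f_i}_{i≥0} be an i.i.d. sequence of random functions from [a, b] to [a, b] (random elements of the space of functions [a, b] → [a, b] equipped with the σ-algebra generated by the evaluation maps), each of which is almost surely nondecreasing. Let F_n(x) = (f_0 ∘ f_1 ∘ ⋯ ∘ f_n)(x). If P(f_0(a) ≥ f_1(b)) > 0, then almost surely F_n converges uniformly on [a, b] to a constant function: almost surely there exists L ∈ [a, b] with sup_{x ∈ [a,b]} |F_n(x) − L| → 0 as n → ∞. -/

import Mathlib

/-!
Write `A_n = F_n(a) ≤ T_n = F_n(t) ≤ B_n = F_n(b)`; `A_n` increases and `B_n` decreases. Since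
`P(f_1(b) ≤ f_0(a)) > 0`, some level `t` has `P(t ≤ f(a)) > 0` and `P(f(b) ≤ t) > 0`. Fix `ε > 0`.
If `B_n - T_n < ε`, the event `t ≤ f_{n+1}(a)` gives `T_n ≤ A_{n+1}`, hence `B_{n+1} - A_{n+1} < ε`;
otherwise the event `f_{n+1}(b) ≤ t` gives `B_{n+1} ≤ T_n ≤ B_n - ε`. As `f_{n+1}` is independent
of `F_n`, the relevant event happens infinitely often almost surely, and either way the gap
`B_n - A_n` cannot stay above `ε`.

Since `F_n(a)` need not be measurable, the argument is run with the regularizations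
`upperReg D f_i ≥ f_i ≥ lowerReg D f_i` along a countable set `D`, which are jointly measurable.
Putting into `D` every point at which `f` jumps with positive probability (countably many, as the
jumps of a monotone self-map of `[a, b]` add up to at most `b - a`), the two regularizations agree
almost surely at every point independent of `f_i`, so their backward compositions agree almost
surely at `a`.
-/

open MeasureTheory ProbabilityTheory Filter Set

/-- `compIter f n = f 0 ∘ f 1 ∘ ⋯ ∘ f n`. -/
def compIter {α : Type*} (f : ℕ → α → α) : ℕ → α → α
  | 0 => f 0
  | n + 1 => compIter f n ∘ f (n + 1)

open scoped ENNReal Topology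

section Composition

variable {α : Type*} [Preorder α] {f g : ℕ → α → α}

theorem monotone_compIter (hf : ∀ i, Monotone (f i)) (n : ℕ) : Monotone (compIter f n) := by
  induction n with
  | zero => exact hf 0
  | succ n ih => exact ih.comp (hf (n + 1))

theorem compIter_le_compIter (hg : ∀ i, Monotone (g i)) (hfg : ∀ i x, f i x ≤ g i x) (n : ℕ)
    (x : α) : compIter f n x ≤ compIter g n x := by
  induction n generalizing x with
  | zero => exact hfg 0 x
  | succ n ih => exact (ih _).trans (monotone_compIter hg n (hfg (n + 1) x))

theorem monotone_compIter_bot [OrderBot α] (hf : ∀ i, Monotone (f i)) :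
    Monotone fun n => compIter f n ⊥ :=
  monotone_nat_of_le_succ fun n => monotone_compIter hf n bot_le

theorem antitone_compIter_top [OrderTop α] (hf : ∀ i, Monotone (f i)) :
    Antitone fun n => compIter f n ⊤ :=
  antitone_nat_of_succ_le fun n => monotone_compIter hf n le_top

end Composition

section Regularization

variable {α β : Type*} [LinearOrder α] [CompleteLattice β]

def upperReg (D : Set α) (w : α → β) (z : α) : β := ⨅ d : D, if z ≤ d then w d else ⊤

def lowerReg (D : Set α) (w : α → β) (z : α) : β := ⨆ d : D, if (d : α) ≤ z then w d else ⊥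

variable {D D' : Set α} {w : α → β} {z z' d : α}

theorem monotone_upperReg (D : Set α) (w : α → β) : Monotone (upperReg D w) := by
  intro z z' hz
  refine iInf_mono fun d => ?_
  split_ifs with h h' h'
  exacts [le_rfl, le_top, absurd (hz.trans h') h, le_rfl]

theorem upperReg_le (hd : d ∈ D) (hzd : z ≤ d) : upperReg D w z ≤ w d :=
  iInf_le_of_le ⟨d, hd⟩ (if_pos hzd).le

theorem le_lowerReg (hd : d ∈ D) (hdz : d ≤ z) : w d ≤ lowerReg D w z :=
  le_iSup_of_le ⟨d, hd⟩ (if_pos hdz).ge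

theorem Monotone.le_upperReg (hw : Monotone w) (D : Set α) (z : α) : w z ≤ upperReg D w z :=
  le_iInf fun d => by split_ifs with h; exacts [hw h, le_top]

theorem Monotone.lowerReg_le (hw : Monotone w) (D : Set α) (z : α) : lowerReg D w z ≤ w z :=
  iSup_le fun d => by split_ifs with h; exacts [hw h, bot_le]

theorem upperReg_anti (h : D ⊆ D') : upperReg D' w z ≤ upperReg D w z :=
  le_iInf fun d => iInf_le_of_le ⟨d, h d.2⟩ le_rfl

theorem lowerReg_mono (h : D ⊆ D') : lowerReg D w z ≤ lowerReg D' w z :=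
  iSup_le fun d => le_iSup_of_le ⟨d, h d.2⟩ le_rfl

theorem upperReg_le_lowerReg_of_le (hd : d ∈ D) (hzd : z ≤ d) (hdz : d ≤ z') :
    upperReg D w z ≤ lowerReg D w z' :=
  (upperReg_le hd hzd).trans (le_lowerReg hd hdz)

theorem Monotone.upperReg_eq_lowerReg_of_subset (hw : Monotone w) (hDD' : D ⊆ D')
    (hz : z ∈ D' ∨ upperReg D w z ≤ lowerReg D w z) : upperReg D' w z = lowerReg D' w z := by
  refine le_antisymm ?_ ((hw.lowerReg_le D' z).trans (hw.le_upperReg D' z))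
  rcases hz with hz | hz
  · exact upperReg_le_lowerReg_of_le hz le_rfl le_rfl
  · exact (upperReg_anti hDD').trans (hz.trans (lowerReg_mono hDD'))

end Regularization

section Measurability

variable {α : Type*} [CompleteLinearOrder α] [TopologicalSpace α] [OrderTopology α]
  [SecondCountableTopology α] [MeasurableSpace α] [BorelSpace α] {D : Set α}

theorem measurable_upperReg (hD : D.Countable) :
    Measurable (Function.uncurry (upperReg D : (α → α) → α → α)) := by
  have := hD.to_subtype
  refine Measurable.iInf fun d => Measurable.ite ?_ ?_ measurable_const
  · exact measurableSet_le measurable_snd measurable_const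
  · exact (measurable_pi_apply (d : α)).comp measurable_fst

theorem measurable_lowerReg (hD : D.Countable) :
    Measurable (Function.uncurry (lowerReg D : (α → α) → α → α)) := by
  have := hD.to_subtype
  refine Measurable.iSup fun d => Measurable.ite ?_ ?_ measurable_const
  · exact measurableSet_le measurable_const measurable_snd
  · exact (measurable_pi_apply (d : α)).comp measurable_fst

end Measurability

section Jumps

theorem sum_sub_le_of_interlaced {ι : Type*} [LinearOrder ι] {u d : ι → ℝ} {lo hi : ℝ}
    (T : Finset ι) (hlohi : lo ≤ hi) (hd : ∀ z ∈ T, lo ≤ d z) (hu : ∀ z ∈ T, u z ≤ hi)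
    (hud : ∀ z₁ ∈ T, ∀ z₂ ∈ T, z₁ < z₂ → u z₁ ≤ d z₂) : ∑ z ∈ T, (u z - d z) ≤ hi - lo := by
  induction T using Finset.induction_on_max generalizing hi with
  | empty => simpa using hlohi
  | insert w s hlt ih =>
    have hw : w ∉ s := fun h => lt_irrefl w (hlt w h)
    have hws := Finset.mem_insert_self w s
    have hs : ∑ z ∈ s, (u z - d z) ≤ d w - lo :=
      ih (hd w hws) (fun z hz => hd z (Finset.mem_insert_of_mem hz))
        (fun z hz => hud z (Finset.mem_insert_of_mem hz) w hws (hlt z hz))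
        (fun z₁ h₁ z₂ h₂ => hud z₁ (Finset.mem_insert_of_mem h₁) z₂ (Finset.mem_insert_of_mem h₂))
    rw [Finset.sum_insert hw]
    linarith [hu w hws]

variable {a b : ℝ} [Fact (a ≤ b)]

theorem sum_ofReal_sub_le_of_interlaced {ι : Type*} [LinearOrder ι] {u d : ι → Icc a b}
    (T : Finset ι) (hud : ∀ z₁ z₂, z₁ < z₂ → u z₁ ≤ d z₂) :
    ∑ z ∈ T, ENNReal.ofReal (u z - d z) ≤ ENNReal.ofReal (b - a) := by
  classical
  rw [← Finset.sum_filter_of_ne (p := fun z => (d z : ℝ) < u z) fun z _ h => by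
      simpa using ENNReal.ofReal_pos.1 (pos_iff_ne_zero.2 h),
    ← ENNReal.ofReal_sum_of_nonneg fun z hz => sub_nonneg.2 (Finset.mem_filter.1 hz).2.le]
  exact ENNReal.ofReal_le_ofReal <| sum_sub_le_of_interlaced _ Fact.out
    (fun z _ => (d z).2.1) (fun z _ => (u z).2.2) fun z₁ _ z₂ _ h => hud z₁ z₂ h

theorem countable_setOf_not_ae_upperReg_le_lowerReg {D : Set (Icc a b)} (hD : D.Countable)
    (hdense : ∀ z₁ z₂, z₁ < z₂ → ∃ d ∈ D, z₁ ≤ d ∧ d ≤ z₂) (ν : Measure (Icc a b → Icc a b))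
    [IsFiniteMeasure ν] :
    {z | ¬ ∀ᵐ w ∂ν, upperReg D w z ≤ lowerReg D w z}.Countable := by
  set jump : Icc a b → (Icc a b → Icc a b) → ℝ≥0∞ := fun z w =>
    ENNReal.ofReal ((upperReg D w z : Icc a b) - (lowerReg D w z : Icc a b) : ℝ)
  have hjump : ∀ z, Measurable (jump z) := fun z =>
    ENNReal.measurable_ofReal.comp <|
      (measurable_subtype_coe.comp ((measurable_upperReg hD).comp
        (measurable_id.prodMk measurable_const))).sub
      (measurable_subtype_coe.comp ((measurable_lowerReg hD).comp
        (measurable_id.prodMk measurable_const)))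
  have hsum : ∀ T : Finset (Icc a b),
      ∑ z ∈ T, ∫⁻ w, jump z w ∂ν ≤ ENNReal.ofReal (b - a) * ν univ := by
    intro T
    rw [← lintegral_finsetSum _ fun z _ => hjump z, ← lintegral_const]
    refine lintegral_mono fun w => sum_ofReal_sub_le_of_interlaced T fun z₁ z₂ h => ?_
    obtain ⟨d, hd, h₁, h₂⟩ := hdense z₁ z₂ h
    exact upperReg_le_lowerReg_of_le hd h₁ h₂
  have hfin : ∑' z, ∫⁻ w, jump z w ∂ν ≠ ∞ :=
    ((ENNReal.tsum_eq_iSup_sum.trans_le (iSup_le hsum)).trans_lt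
      (ENNReal.mul_lt_top ENNReal.ofReal_lt_top (measure_lt_top ν univ))).ne
  refine (Summable.countable_support_ennreal hfin).mono fun z hz => ?_
  by_contra hzero
  refine hz ?_
  filter_upwards [(lintegral_eq_zero_iff (hjump z)).1 (Function.notMem_support.1 hzero)] with w hw
  simpa [jump, sub_nonpos] using hw

end Jumps

section Threshold

variable {Ω α : Type*} [MeasurableSpace Ω] {μ : Measure Ω} [LinearOrder α] [TopologicalSpace α]
  [OrderClosedTopology α] [DenselyOrdered α] [TopologicalSpace.SeparableSpace α]

theorem IsUpperSet.exists_countable_subset_biUnion_Ici {S : Set α} (hS : IsUpperSet S) :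
    ∃ C ⊆ S, C.Countable ∧ S ⊆ ⋃ c ∈ C, Ici c := by
  obtain ⟨Q, hQc, hQd⟩ := TopologicalSpace.exists_countable_dense α
  refine ⟨{x ∈ S | ∀ s ∈ S, x ≤ s} ∪ (S ∩ Q), union_subset (sep_subset _ _) inter_subset_left,
    (Subsingleton.countable fun x hx y hy => le_antisymm (hx.2 y hy.1) (hy.2 x hx.1)).union
      (hQc.mono inter_subset_right), fun x hx => ?_⟩
  by_cases hmin : ∀ s ∈ S, x ≤ s
  · exact mem_biUnion (Or.inl ⟨hx, hmin⟩) self_mem_Ici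
  · obtain ⟨s, hs, hsx⟩ := not_forall₂.1 hmin
    obtain ⟨q, hq, hsq, hqx⟩ := hQd.exists_between (not_le.1 hsx)
    exact mem_biUnion (Or.inr ⟨hS hsq.le hs, hq⟩) hqx.le

theorem IsUpperSet.measure_preimage_eq_zero {S : Set α} (hS : IsUpperSet S) {X : Ω → α}
    (h : ∀ t ∈ S, μ {ω | t ≤ X ω} = 0) : μ (X ⁻¹' S) = 0 := by
  obtain ⟨C, hCS, hC, hcover⟩ := hS.exists_countable_subset_biUnion_Ici
  refine measure_mono_null (fun ω hω => ?_)
    ((measure_biUnion_null_iff hC).2 fun c hc => h c (hCS hc))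
  simpa using hcover hω

theorem IsLowerSet.measure_preimage_eq_zero {S : Set α} (hS : IsLowerSet S) {X : Ω → α}
    (h : ∀ t ∈ S, μ {ω | X ω ≤ t} = 0) : μ (X ⁻¹' S) = 0 :=
  hS.toDual.measure_preimage_eq_zero (X := OrderDual.toDual ∘ X) h

theorem exists_measure_le_pos_and_measure_le_pos {X Y : Ω → α}
    (h : 0 < μ {ω | Y ω ≤ X ω}) : ∃ t, 0 < μ {ω | t ≤ X ω} ∧ 0 < μ {ω | Y ω ≤ t} := by
  by_contra! H
  set S := {t | 0 < μ {ω | Y ω ≤ t}}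
  have hS : IsUpperSet S := fun t t' htt' ht =>
    ht.trans_le (measure_mono fun ω hω => le_trans hω htt')
  have hX : μ (X ⁻¹' S) = 0 := hS.measure_preimage_eq_zero fun t ht =>
    by_contra fun h0 => (H t (pos_iff_ne_zero.2 h0)).not_gt ht
  have hY : μ (Y ⁻¹' Sᶜ) = 0 := hS.compl.measure_preimage_eq_zero fun t ht =>
    nonpos_iff_eq_zero.1 (not_lt.1 ht)
  refine h.ne' (measure_mono_null (fun ω hω => ?_) (measure_union_null hX hY))
  by_cases hXS : X ω ∈ S
  · exact Or.inl hXS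
  · exact Or.inr (hS.compl hω hXS)

end Threshold

section Frequently

variable {Ω : Type*} {mΩ : MeasurableSpace Ω} {μ : Measure Ω}

theorem ae_frequently_of_measure_inter_compl_le [IsFiniteMeasure μ] {ℱ : ℕ → MeasurableSpace Ω}
    (hℱ : Monotone ℱ) {E : ℕ → Set Ω} (hE : ∀ n, MeasurableSet[ℱ (n + 1)] (E n)) {q : ℝ≥0∞}
    (hq : q < 1) (hstep : ∀ n W, MeasurableSet[ℱ n] W → μ (W ∩ (E n)ᶜ) ≤ q * μ W) :
    ∀ᵐ ω ∂μ, ∃ᶠ n in atTop, ω ∈ E n := by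
  have hmiss : ∀ M, μ (⋂ k, (E (M + k))ᶜ) = 0 := by
    intro M
    set W : ℕ → Set Ω := fun K => ⋂ k < K, (E (M + k))ᶜ
    have hWm : ∀ K, MeasurableSet[ℱ (M + K)] (W K) := fun K =>
      MeasurableSet.iInter fun k => MeasurableSet.iInter fun hk =>
        (hℱ (by omega : M + k + 1 ≤ M + K) _ (hE (M + k))).compl
    have hW : ∀ K, μ (W K) ≤ q ^ K * μ univ := by
      intro K
      induction K with
      | zero => simp [W]
      | succ K ih =>
        calc μ (W (K + 1)) = μ (W K ∩ (E (M + K))ᶜ) := by rw [← biInter_lt_succ]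
          _ ≤ q * μ (W K) := hstep _ _ (hWm K)
          _ ≤ q ^ (K + 1) * μ univ := by rw [pow_succ', mul_assoc]; gcongr
    have hlim : Tendsto (fun K => q ^ K * μ univ) atTop (𝓝 0) := by
      simpa using ENNReal.Tendsto.mul_const (ENNReal.tendsto_pow_atTop_nhds_zero_of_lt_one hq)
        (Or.inr (measure_ne_top μ univ))
    refine le_antisymm (ge_of_tendsto' hlim fun K => ?_) bot_le
    exact (measure_mono fun ω hω => mem_iInter₂.2 fun k _ => mem_iInter.1 hω k).trans (hW K)
  filter_upwards [ae_all_iff.2 fun M => measure_eq_zero_iff_ae_notMem.1 (hmiss M)] with ω hω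
  refine frequently_atTop.2 fun M => ?_
  obtain ⟨k, hk⟩ : ∃ k, ω ∈ E (M + k) := by simpa using hω M
  exact ⟨M + k, le_add_right le_rfl, hk⟩

theorem measure_inter_compl_ite_le {m₁ m₂ : MeasurableSpace Ω} (hm₁ : m₁ ≤ mΩ)
    (hind : Indep m₁ m₂ μ) {W H U L : Set Ω} (hW : MeasurableSet[m₁] W)
    (hH : MeasurableSet[m₁] H) (hU : MeasurableSet[m₂] U) (hL : MeasurableSet[m₂] L) :
    μ (W ∩ ((H ∩ U) ∪ (Hᶜ ∩ L))ᶜ) ≤ max (μ Uᶜ) (μ Lᶜ) * μ W := by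
  rw [Indep_iff] at hind
  calc μ (W ∩ ((H ∩ U) ∪ (Hᶜ ∩ L))ᶜ) ≤ μ ((W ∩ H) ∩ Uᶜ ∪ (W \ H) ∩ Lᶜ) := by
        refine measure_mono fun ω ⟨hW, hE⟩ => ?_
        by_cases hωH : ω ∈ H
        · exact Or.inl ⟨⟨hW, hωH⟩, fun hωU => hE (Or.inl ⟨hωH, hωU⟩)⟩
        · exact Or.inr ⟨⟨hW, hωH⟩, fun hωL => hE (Or.inr ⟨hωH, hωL⟩)⟩
    _ ≤ μ (W ∩ H) * μ Uᶜ + μ (W \ H) * μ Lᶜ := by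
        rw [← hind _ _ (hW.inter hH) hU.compl, ← hind _ _ (hW.diff hH) hL.compl]
        exact measure_union_le _ _
    _ ≤ max (μ Uᶜ) (μ Lᶜ) * μ W := by
        rw [← measure_inter_add_sdiff W (hm₁ _ hH), mul_add, mul_comm, mul_comm (μ (W \ H))]
        gcongr
        exacts [le_max_left _ _, le_max_right _ _]

theorem ae_frequently_mem_ite [IsFiniteMeasure μ] {ℱ 𝒢 : ℕ → MeasurableSpace Ω}
    (hℱ : Monotone ℱ) (hℱle : ∀ n, ℱ n ≤ mΩ) (h𝒢ℱ : ∀ n, 𝒢 n ≤ ℱ n)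
    (hind : ∀ n, Indep (ℱ n) (𝒢 (n + 1)) μ) {H U L : ℕ → Set Ω}
    (hH : ∀ n, MeasurableSet[ℱ n] (H n)) (hU : ∀ n, MeasurableSet[𝒢 n] (U n))
    (hL : ∀ n, MeasurableSet[𝒢 n] (L n)) {q : ℝ≥0∞} (hq : q < 1) (hUq : ∀ n, μ (U n)ᶜ ≤ q)
    (hLq : ∀ n, μ (L n)ᶜ ≤ q) :
    ∀ᵐ ω ∂μ, ∃ᶠ n in atTop, ω ∈ (H n ∩ U (n + 1)) ∪ ((H n)ᶜ ∩ L (n + 1)) := by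
  refine ae_frequently_of_measure_inter_compl_le hℱ (fun n => ?_) hq fun n W hW => ?_
  · exact ((hℱ n.le_succ _ (hH n)).inter (h𝒢ℱ _ _ (hU _))).union
      ((hℱ n.le_succ _ (hH n)).compl.inter (h𝒢ℱ _ _ (hL _)))
  · exact (measure_inter_compl_ite_le (hℱle n) (hind n) hW (hH n) (hU _) (hL _)).trans
      (by gcongr; exact max_le (hUq _) (hLq _))

end Frequently

section Independence

variable {Ω M : Type*} {mΩ : MeasurableSpace Ω} {μ : Measure Ω} [mM : MeasurableSpace M]
  {ξ : ℕ → Ω → M} {S T : Set ℕ} {i : ℕ}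

theorem ProbabilityTheory.IndepFun.ae_mem_of_forall_ae [IsFiniteMeasure μ] {α β : Type*}
    [MeasurableSpace α] [MeasurableSpace β] {X : Ω → α} {Y : Ω → β} (h : IndepFun X Y μ)
    (hX : Measurable X) (hY : Measurable Y) {S : Set (α × β)} (hS : MeasurableSet S)
    (hall : ∀ x, ∀ᵐ ω ∂μ, (x, Y ω) ∈ S) : ∀ᵐ ω ∂μ, (X ω, Y ω) ∈ S := by
  have hprod := (indepFun_iff_map_prod_eq_prod_map_map hX.aemeasurable hY.aemeasurable).1 h
  refine ae_of_ae_map (hX.prodMk hY).aemeasurable (p := (· ∈ S)) ?_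
  rw [hprod, Measure.ae_prod_mem_iff_ae_ae_mem hS]
  exact Eventually.of_forall fun x =>
    (ae_map_iff hY.aemeasurable (measurable_prodMk_left hS)).2 (hall x)

abbrev sigmaGen (ξ : ℕ → Ω → M) (S : Set ℕ) : MeasurableSpace Ω :=
  ⨆ i ∈ S, MeasurableSpace.comap (ξ i) mM

theorem comap_le_sigmaGen (hi : i ∈ S) : MeasurableSpace.comap (ξ i) mM ≤ sigmaGen ξ S :=
  le_iSup₂ (f := fun i _ => MeasurableSpace.comap (ξ i) mM) i hi

theorem measurable_sigmaGen (hi : i ∈ S) : Measurable[sigmaGen ξ S] (ξ i) :=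
  Measurable.of_comap_le (comap_le_sigmaGen hi)

theorem sigmaGen_mono (h : S ⊆ T) : sigmaGen ξ S ≤ sigmaGen ξ T :=
  biSup_mono fun _ hi => h hi

theorem sigmaGen_le (hξ : ∀ i, Measurable (ξ i)) : sigmaGen ξ S ≤ mΩ :=
  iSup₂_le fun i _ => (hξ i).comap_le

theorem ProbabilityTheory.iIndepFun.indep_sigmaGen (hind : iIndepFun ξ μ)
    (hξ : ∀ i, Measurable (ξ i)) (hST : Disjoint S T) :
    Indep (sigmaGen ξ S) (sigmaGen ξ T) μ :=
  indep_iSup_of_disjoint (fun i => (hξ i).comap_le) ((iIndepFun_iff_iIndep _ _ _).1 hind) hST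

end Independence

section RandomMaps

variable {Ω M α : Type*} {mΩ : MeasurableSpace Ω} {μ : Measure Ω} [MeasurableSpace M]
  [MeasurableSpace α] {ξ : ℕ → Ω → M} {Φ Ψ : M → α → α}

theorem measurable_compIter_apply {m : MeasurableSpace Ω} (hΦ : Measurable (Function.uncurry Φ))
    {n : ℕ} (hξ : ∀ i ≤ n, Measurable[m] (ξ i)) {Z : Ω → α} (hZ : Measurable[m] Z) :
    Measurable[m] fun ω => compIter (fun i => Φ (ξ i ω)) n (Z ω) := by
  induction n generalizing Z with
  | zero => exact hΦ.comp ((hξ 0 le_rfl).prodMk hZ)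
  | succ n ih =>
    exact ih (fun i hi => hξ i (by omega)) (hΦ.comp ((hξ (n + 1) le_rfl).prodMk hZ))

theorem ae_compIter_eq_of_forall_ae_eq [IsFiniteMeasure μ] [MeasurableEq α]
    (hξ : ∀ i, Measurable (ξ i)) (hind : iIndepFun ξ μ) (hΦ : Measurable (Function.uncurry Φ))
    (hΨ : Measurable (Function.uncurry Ψ)) (heq : ∀ i z, ∀ᵐ ω ∂μ, Φ (ξ i ω) z = Ψ (ξ i ω) z)
    (n : ℕ) (x : α) :
    ∀ᵐ ω ∂μ, compIter (fun i => Φ (ξ i ω)) n x = compIter (fun i => Ψ (ξ i ω)) n x := by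
  have hstep : ∀ {S j} {Z : Ω → α}, j ∉ S → Measurable[sigmaGen ξ S] Z →
      ∀ᵐ ω ∂μ, Φ (ξ j ω) (Z ω) = Ψ (ξ j ω) (Z ω) := by
    intro S j Z hj hZ
    have hZj : IndepFun Z (ξ j) μ := (IndepFun_iff_Indep _ _ _).2 <|
      indep_of_indep_of_le_right (indep_of_indep_of_le_left
        (hind.indep_sigmaGen hξ (disjoint_singleton_right.2 hj)) hZ.comap_le)
        (comap_le_sigmaGen (ξ := ξ) rfl)
    exact hZj.ae_mem_of_forall_ae (S := {p | Φ p.2 p.1 = Ψ p.2 p.1})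
      (hZ.mono (sigmaGen_le hξ) le_rfl) (hξ j)
      (measurableSet_eq_fun (hΦ.comp measurable_swap) (hΨ.comp measurable_swap)) (heq j)
  -- the point fed to the outer maps `ξ 0, …, ξ n` is a function of `ξ (n + 1), ξ (n + 2), …`
  suffices ∀ n (Z : Ω → α), Measurable[sigmaGen ξ (Ioi n)] Z →
      ∀ᵐ ω ∂μ, compIter (fun i => Φ (ξ i ω)) n (Z ω) = compIter (fun i => Ψ (ξ i ω)) n (Z ω) from
    this n (fun _ => x) measurable_const
  intro n
  induction n with
  | zero => exact fun Z hZ => hstep (by simp) hZ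
  | succ n ih =>
    intro Z hZ
    have hZ' : Measurable[sigmaGen ξ (Ioi n)] fun ω => Φ (ξ (n + 1) ω) (Z ω) :=
      hΦ.comp ((measurable_sigmaGen (by simp)).prodMk
        (hZ.mono (sigmaGen_mono (Ioi_subset_Ioi n.le_succ)) le_rfl))
    filter_upwards [ih _ hZ', hstep (j := n + 1) (by simp) hZ] with ω hω hω'
    exact hω.trans (congrArg (compIter (fun i => Ψ (ξ i ω)) n) hω')

end RandomMaps

theorem tendsto_sub_of_frequently {A B T : ℕ → ℝ} (hA : Monotone A) (hB : Antitone B)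
    (hAB : ∀ n, A n ≤ B n)
    (h : ∀ k : ℕ, ∃ᶠ n in atTop, (B n - T n < 1 / (k + 1) ∧ T n ≤ A (n + 1)) ∨
      (1 / (k + 1) ≤ B n - T n ∧ B (n + 1) ≤ T n)) :
    Tendsto (fun n => B n - A n) atTop (𝓝 0) := by
  have hbdd : BddBelow (range fun n => B n - A n) :=
    ⟨0, by rintro _ ⟨n, rfl⟩; exact sub_nonneg.2 (hAB n)⟩
  have hlim := tendsto_atTop_ciInf (fun m n hmn => sub_le_sub (hB hmn) (hA hmn)) hbdd
  set D := ⨅ n, (B n - A n)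
  suffices D = 0 by rwa [this] at hlim
  refine le_antisymm (not_lt.1 fun hD => ?_) (le_ciInf fun n => sub_nonneg.2 (hAB n))
  obtain ⟨k, hk⟩ := exists_nat_one_div_lt hD
  obtain ⟨N, hN⟩ := exists_lt_of_ciInf_lt (lt_add_of_pos_right D (Nat.one_div_pos_of_nat (n := k)))
  obtain ⟨n, hNn, hn⟩ := frequently_atTop.1 (h k) N
  -- either alternative at a time `n ≥ N` pushes the gap at time `n + 1` below its infimum `D`
  have hDn : D ≤ B (n + 1) - A (n + 1) := ciInf_le hbdd (n + 1)
  have hA' := hA (hNn.trans n.le_succ)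
  have hB' := hB n.le_succ
  have hB'' := hB hNn
  rcases hn with ⟨hgap, hT⟩ | ⟨hgap, hT⟩ <;> linarith

section Coalescence

variable {Ω M : Type*} [MeasurableSpace Ω] [MeasurableSpace M] {P : Measure Ω}
  [IsProbabilityMeasure P] {a b : ℝ} [Fact (a ≤ b)]

theorem ae_tendsto_compIter_top_sub_compIter_bot {ξ : ℕ → Ω → M} {Φ : M → Icc a b → Icc a b}
    (hξ : ∀ i, Measurable (ξ i)) (hind : iIndepFun ξ P)
    (hident : ∀ i, IdentDistrib (ξ i) (ξ 0) P P) (hΦ : Measurable (Function.uncurry Φ))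
    (hmono : ∀ m, Monotone (Φ m)) (t : Icc a b) (hU : 0 < P {ω | t ≤ Φ (ξ 0 ω) ⊥})
    (hL : 0 < P {ω | Φ (ξ 0 ω) ⊤ ≤ t}) :
    ∀ᵐ ω ∂P, Tendsto (fun n => (↑(compIter (fun i => Φ (ξ i ω)) n ⊤) : ℝ) -
      ↑(compIter (fun i => Φ (ξ i ω)) n ⊥)) atTop (𝓝 0) := by
  set X : ℕ → Ω → Icc a b → Icc a b := fun n ω => compIter (fun i => Φ (ξ i ω)) n
  have hXm : ∀ n x, Measurable[sigmaGen ξ (Iic n)] fun ω => (X n ω x : ℝ) := fun n x =>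
    measurable_subtype_coe.comp <| measurable_compIter_apply hΦ
      (fun i hi => measurable_sigmaGen (mem_Iic.2 hi)) measurable_const
  have hΦx : ∀ x, Measurable fun m => Φ m x := fun x =>
    hΦ.comp (measurable_id.prodMk measurable_const)
  set SU : Set M := {m | t ≤ Φ m ⊥}
  set SL : Set M := {m | Φ m ⊤ ≤ t}
  have hSU : MeasurableSet SU := measurableSet_le measurable_const (hΦx ⊥)
  have hSL : MeasurableSet SL := measurableSet_le (hΦx ⊤) measurable_const
  set q := max (P (ξ 0 ⁻¹' SU)ᶜ) (P (ξ 0 ⁻¹' SL)ᶜ)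
  have hq : q < 1 := by
    simp only [q, prob_compl_eq_one_sub ((hξ 0) hSU), prob_compl_eq_one_sub ((hξ 0) hSL)]
    exact max_lt (ENNReal.sub_lt_self ENNReal.one_ne_top one_ne_zero hU.ne')
      (ENNReal.sub_lt_self ENNReal.one_ne_top one_ne_zero hL.ne')
  set H : ℕ → ℕ → Set Ω := fun k n => {ω | (X n ω ⊤ : ℝ) - X n ω t < 1 / (k + 1)}
  have hfreq : ∀ k, ∀ᵐ ω ∂P, ∃ᶠ n in atTop,
      ω ∈ (H k n ∩ ξ (n + 1) ⁻¹' SU) ∪ ((H k n)ᶜ ∩ ξ (n + 1) ⁻¹' SL) := by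
    intro k
    refine ae_frequently_mem_ite (ℱ := fun n => sigmaGen ξ (Iic n))
      (𝒢 := fun n => MeasurableSpace.comap (ξ n) ‹_›) (H := H k) (U := fun n => ξ n ⁻¹' SU)
      (L := fun n => ξ n ⁻¹' SL) (fun m n hmn => sigmaGen_mono (Iic_subset_Iic.2 hmn))
      (fun n => sigmaGen_le hξ)
      (fun n => comap_le_sigmaGen (ξ := ξ) self_mem_Iic) (fun n => ?_)
      (fun n => measurableSet_lt ((hXm n ⊤).sub (hXm n t)) measurable_const)
      (fun n => ⟨SU, hSU, rfl⟩) (fun n => ⟨SL, hSL, rfl⟩) hq (fun n => ?_) (fun n => ?_)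
    · exact indep_of_indep_of_le_right
        (hind.indep_sigmaGen hξ (S := Iic n) (T := {n + 1}) (by simp))
        (comap_le_sigmaGen (ξ := ξ) rfl)
    · exact ((hident n).measure_mem_eq hSU.compl).trans_le (le_max_left _ _)
    · exact ((hident n).measure_mem_eq hSL.compl).trans_le (le_max_right _ _)
  filter_upwards [ae_all_iff.2 hfreq] with ω hω
  have hXmono : ∀ n, Monotone (X n ω) := monotone_compIter fun i => hmono _
  refine tendsto_sub_of_frequently (T := fun n => (X n ω t : ℝ))
    (fun m n h => monotone_compIter_bot (fun i => hmono _) h)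
    (fun m n h => antitone_compIter_top (fun i => hmono _) h)
    (fun n => hXmono n bot_le) fun k => (hω k).mono fun n hn => ?_
  rcases hn with ⟨hgap, hSUn⟩ | ⟨hgap, hSLn⟩
  · exact Or.inl ⟨hgap, hXmono n hSUn⟩
  · exact Or.inr ⟨not_lt.1 hgap, hXmono n hSLn⟩

theorem exists_countable_upperReg_ae_eq_lowerReg {f : ℕ → Ω → (Icc a b → Icc a b)}
    (hident : ∀ i, IdentDistrib (f i) (f 0) P P) (hmono : ∀ i, ∀ᵐ ω ∂P, Monotone (f i ω)) :
    ∃ D : Set (Icc a b), D.Countable ∧ ⊤ ∈ D ∧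
      ∀ i z, ∀ᵐ ω ∂P, upperReg D (f i ω) z = lowerReg D (f i ω) z := by
  obtain ⟨s, hsc, hsd⟩ := TopologicalSpace.exists_countable_dense (Icc a b)
  set D₀ := insert ⊤ s
  have hD₀ : D₀.Countable := hsc.insert ⊤
  set J := {z | ¬ ∀ᵐ w ∂(P.map (f 0)), upperReg D₀ w z ≤ lowerReg D₀ w z}
  have hJ : J.Countable := countable_setOf_not_ae_upperReg_le_lowerReg hD₀ (fun z₁ z₂ h => by
    obtain ⟨d, hd, hd'⟩ := hsd.exists_between h
    exact ⟨d, mem_insert_of_mem _ hd, hd'.1.le, hd'.2.le⟩) _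
  refine ⟨D₀ ∪ J, hD₀.union hJ, Or.inl (mem_insert ⊤ s), fun i z => ?_⟩
  have hz : ∀ᵐ ω ∂P, z ∈ D₀ ∪ J ∨ upperReg D₀ (f i ω) z ≤ lowerReg D₀ (f i ω) z := by
    by_cases hz : z ∈ D₀ ∪ J
    · exact ae_of_all _ fun _ => Or.inl hz
    have hz' := not_not.1 fun h => hz (Or.inr h)
    rw [← (hident i).map_eq] at hz'
    exact (ae_of_ae_map (hident i).aemeasurable_fst hz').mono fun _ => Or.inr
  filter_upwards [hmono i, hz] with ω hω hz
  exact hω.upperReg_eq_lowerReg_of_subset subset_union_left hz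

end Coalescence

theorem tendsto_iSup_abs_sub_of_le {ι : Type*} {F : ℕ → ι → ℝ} {A B : ℕ → ℝ} {L : ℝ}
    (hAF : ∀ n x, A n ≤ F n x) (hFB : ∀ n x, F n x ≤ B n) (hAL : ∀ n, A n ≤ L)
    (hLB : ∀ n, L ≤ B n) (h : Tendsto (fun n => B n - A n) atTop (𝓝 0)) :
    Tendsto (fun n => ⨆ x, |F n x - L|) atTop (𝓝 0) := by
  refine squeeze_zero (fun n => Real.iSup_nonneg fun x => abs_nonneg _) (fun n => ?_) h
  refine Real.iSup_le (fun x => abs_le.2 ⟨?_, ?_⟩) (by linarith [hAL n, hLB n])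
  · linarith [hAF n x, hLB n]
  · linarith [hFB n x, hAL n]

theorem exists_tendsto_iSup_abs_compIter_sub {a b : ℝ} [Fact (a ≤ b)]
    {f up lo : ℕ → Icc a b → Icc a b} (hf : ∀ i, Monotone (f i)) (hup : ∀ i, Monotone (up i))
    (hlo : ∀ i x, lo i x ≤ f i x) (hup' : ∀ i x, f i x ≤ up i x)
    (heq : ∀ n, compIter up n ⊥ = compIter lo n ⊥)
    (h : Tendsto (fun n => (↑(compIter up n ⊤) : ℝ) - ↑(compIter up n ⊥)) atTop (𝓝 0)) :
    ∃ L : Icc a b, Tendsto (fun n => ⨆ x, |(↑(compIter f n x) : ℝ) - L|) atTop (𝓝 0) := by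
  refine ⟨⨆ n, compIter up n ⊥, tendsto_iSup_abs_sub_of_le (fun n x => ?_) (fun n x => ?_)
    (fun n => Subtype.coe_le_coe.2 (le_iSup (fun n => compIter up n ⊥) n))
    (fun n => Subtype.coe_le_coe.2 (iSup_le fun m => ?_)) h⟩
  · rw [heq n]
    exact Subtype.coe_le_coe.2 ((compIter_le_compIter hf hlo n ⊥).trans
      (monotone_compIter hf n bot_le))
  · exact Subtype.coe_le_coe.2 ((monotone_compIter hf n le_top).trans
      (compIter_le_compIter hup hup' n ⊤))
  · exact (monotone_compIter_bot hup (le_max_left m n)).trans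
      ((monotone_compIter hup _ bot_le).trans (antitone_compIter_top hup (le_max_right m n)))

theorem ae_exists_tendsto_iSup_abs_compIter_sub {Ω : Type*} [MeasurableSpace Ω] {P : Measure Ω}
    [IsProbabilityMeasure P] {a b : ℝ} [Fact (a ≤ b)] {f : ℕ → Ω → (Icc a b → Icc a b)}
    (hf : ∀ i, Measurable (f i)) (hindep : iIndepFun f P)
    (hident : ∀ i, IdentDistrib (f i) (f 0) P P) (hmono : ∀ i, ∀ᵐ ω ∂P, Monotone (f i ω))
    (hpos : 0 < P {ω | f 1 ω ⊤ ≤ f 0 ω ⊥}) :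
    ∀ᵐ ω ∂P, ∃ L : Icc a b,
      Tendsto (fun n => ⨆ x, |(↑(compIter (fun i => f i ω) n x) : ℝ) - L|) atTop (𝓝 0) := by
  obtain ⟨t, hU, hL⟩ := exists_measure_le_pos_and_measure_le_pos hpos
  replace hL : 0 < P {ω | f 0 ω ⊤ ≤ t} := hL.trans_eq <| (hident 1).measure_mem_eq
    (s := {w | w ⊤ ≤ t}) (measurableSet_le (measurable_pi_apply ⊤) measurable_const)
  obtain ⟨D, hD, htop, hreg⟩ := exists_countable_upperReg_ae_eq_lowerReg hident hmono
  have hcoal := ae_tendsto_compIter_top_sub_compIter_bot hf hindep hident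
    (measurable_upperReg hD) (monotone_upperReg D) t
    (hU.trans_le (measure_mono_ae ((hmono 0).mono fun ω hω h => h.trans (hω.le_upperReg D ⊥))))
    (hL.trans_le (measure_mono fun ω (h : f 0 ω ⊤ ≤ t) => (upperReg_le htop le_rfl).trans h))
  have hchain := ae_all_iff.2 fun n => ae_compIter_eq_of_forall_ae_eq hf hindep
    (measurable_upperReg hD) (measurable_lowerReg hD) hreg n ⊥
  filter_upwards [hcoal, hchain, ae_all_iff.2 hmono] with ω hω hωc hωm
  exact exists_tendsto_iSup_abs_compIter_sub hωm (fun i => monotone_upperReg D _)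
    (fun i x => (hωm i).lowerReg_le D x) (fun i x => (hωm i).le_upperReg D x) hωc hω

theorem stmt_9 {Ω : Type*} [MeasurableSpace Ω] (P : Measure Ω) [IsProbabilityMeasure P]
    (a b : ℝ) (hab : a ≤ b)
    (f : ℕ → Ω → (Set.Icc a b → Set.Icc a b))
    (hindep : iIndepFun f P)
    (hident : ∀ i, IdentDistrib (f i) (f 0) P P)
    (hmono : ∀ i, ∀ᵐ ω ∂P, Monotone (f i ω))
    (hpos : 0 < P {ω | f 1 ω ⟨b, hab, le_refl b⟩ ≤ f 0 ω ⟨a, le_refl a, hab⟩}) :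
    ∀ᵐ ω ∂P, ∃ L : Set.Icc a b,
      Tendsto (fun n => ⨆ x : Set.Icc a b,
          |(compIter (fun i => f i ω) n x).1 - (L : ℝ)|)
        atTop (nhds 0) := by
  have : Fact (a ≤ b) := ⟨hab⟩
  have hf : ∀ i, AEMeasurable (f i) P := fun i => (hident i).aemeasurable_fst
  choose g hg hfg using id hf
  have hposg : {ω | f 1 ω ⊤ ≤ f 0 ω ⊥} =ᵐ[P] {ω | g 1 ω ⊤ ≤ g 0 ω ⊥} := by
    filter_upwards [hfg 0, hfg 1] with ω h0 h1
    change (f 1 ω ⊤ ≤ f 0 ω ⊥) = (g 1 ω ⊤ ≤ g 0 ω ⊥)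
    rw [h0, h1]
  have hlim := ae_exists_tendsto_iSup_abs_compIter_sub hg
    (hindep.congr hfg)
    (fun i => ((IdentDistrib.of_ae_eq (hf i) (hfg i)).symm.trans (hident i)).trans
      (IdentDistrib.of_ae_eq (hf 0) (hfg 0)))
    (fun i => by filter_upwards [hmono i, hfg i] with ω hω h; exact h ▸ hω)
    (hpos.trans_eq (measure_congr hposg))
  filter_upwards [hlim, ae_all_iff.2 hfg] with ω hω hfgω
  rwa [show (fun i => f i ω) = fun i => g i ω from funext hfgω]
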